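/- Let R > 4 and Λ ≥ 2. Then for every compact set K ⊂ (0, ∞)^{L_R*} there exists Δ_K > 0 such that for every f ∈ K, ∑_{p∈L_R*} Q^{NR}_p[f]·(−1/f_p) ≤ −Δ_K. -/

import Mathlib

open scoped BigOperators Classical

/-- Euclidean norm of a point of the integer lattice `ℤ³`. -/
noncomputable def enorm3 (p : Fin 3 → ℤ) : ℝ := Real.sqrt (∑ i, ((p i : ℝ))^2)

/-- The truncated lattice `L_R* = {p ∈ ℤ³ : 0 < |p| < R}` (as a finite set). -/
noncomputable def latticeBall (R : ℝ) : Finset (Fin 3 → ℤ) :=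
  (Finset.Icc (fun _ => (-⌈R⌉ : ℤ)) (fun _ => (⌈R⌉ : ℤ))).filter
    (fun p => 0 < enorm3 p ∧ enorm3 p < R)

/-- Right-hand side of the discrete exact-resonance acoustic wave kinetic system, with
kernel `V_{p₁,p₂,p₃} = |p₁||p₂||p₃|` and phonon dispersion `ω(p) = |p|`. -/
noncomputable def Qres (R : ℝ) (f : (Fin 3 → ℤ) → ℝ) (p1 : Fin 3 → ℤ) : ℝ :=
  (∑ p2 ∈ latticeBall R, ∑ p3 ∈ latticeBall R,
      if p1 = p2 + p3 ∧ enorm3 p1 = enorm3 p2 + enorm3 p3 then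
        enorm3 p1 * enorm3 p2 * enorm3 p3 *
          (f p2 * f p3 - f p1 * (f p2 + f p3)) else 0)
  - 2 * ∑ p2 ∈ latticeBall R, ∑ p3 ∈ latticeBall R,
      if p3 = p1 + p2 ∧ enorm3 p3 = enorm3 p1 + enorm3 p2 then
        enorm3 p1 * enorm3 p2 * enorm3 p3 *
          (f p1 * f p2 - f p3 * (f p1 + f p2)) else 0

/-- Right-hand side of the discrete near-resonance acoustic wave kinetic system with
resonance broadening `Λ`. -/
noncomputable def QNR (R Λ : ℝ) (f : (Fin 3 → ℤ) → ℝ) (p1 : Fin 3 → ℤ) : ℝ :=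
  (∑ p2 ∈ latticeBall R, ∑ p3 ∈ latticeBall R,
      if p1 = p2 + p3 ∧ |enorm3 p1 - enorm3 p2 - enorm3 p3| ≤ Λ then
        enorm3 p1 * enorm3 p2 * enorm3 p3 *
          (f p2 * f p3 - f p1 * (f p2 + f p3)) else 0)
  - 2 * ∑ p2 ∈ latticeBall R, ∑ p3 ∈ latticeBall R,
      if p3 = p1 + p2 ∧ |enorm3 p3 - enorm3 p1 - enorm3 p2| ≤ Λ then
        enorm3 p1 * enorm3 p2 * enorm3 p3 *
          (f p1 * f p2 - f p3 * (f p1 + f p2)) else 0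

/-- Extend a state defined on the truncated lattice `L_R*` by zero to all of `ℤ³`. -/
noncomputable def extendLB (R : ℝ) (g : {p // p ∈ latticeBall R} → ℝ) :
    (Fin 3 → ℤ) → ℝ :=
  fun p => if h : p ∈ latticeBall R then g ⟨p, h⟩ else 0

/-!
Pairing `Q^{NR}[f]` with `1/f` and symmetrising over the collisional triples turns the sum into
`∑ V (f_b f_c - f_a f_b - f_a f_c)² / (f_a f_b f_c)` over near-resonant triples `a = b + c`,
a sum of nonnegative terms. For `Λ ≥ 2` both `2e₁ = e₁ + e₁` and `e₁ = 2e₁ + (-e₁)` are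
near-resonant, and their squared brackets cannot vanish simultaneously for positive `f`, so the
dissipation is strictly negative on the positive orthant. It is continuous there, hence attains a
negative maximum on every nonempty compact subset.
-/

open Finset

lemma IsCompact.exists_pos_forall_le_neg {X : Type*} [TopologicalSpace X] {K : Set X}
    (hK : IsCompact K) {φ : X → ℝ} (hφ : ContinuousOn φ K) (hneg : ∀ x ∈ K, φ x < 0) :
    ∃ Δ : ℝ, 0 < Δ ∧ ∀ x ∈ K, φ x ≤ -Δ := by
  rcases K.eq_empty_or_nonempty with rfl | hne
  · exact ⟨1, one_pos, fun _ h => h.elim⟩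
  obtain ⟨x₀, hx₀, hmax⟩ := hK.exists_isMaxOn hne hφ
  exact ⟨-φ x₀, neg_pos.mpr (hneg x₀ hx₀), fun x hx => (neg_neg (φ x₀)).symm ▸ hmax hx⟩

lemma sum_gain_sub_loss_mul {α : Type*} (s : Finset α) (G : α → α → α → ℝ)
    (hG : ∀ a b c, G a b c = G a c b) (h : α → ℝ) :
    ∑ a ∈ s, (∑ b ∈ s, ∑ c ∈ s, G a b c - 2 * ∑ b ∈ s, ∑ c ∈ s, G c a b) * h a
      = ∑ a ∈ s, ∑ b ∈ s, ∑ c ∈ s, G a b c * (h a - h b - h c) := by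
  have hloss : ∑ a ∈ s, ∑ b ∈ s, ∑ c ∈ s, G c a b * h a
      = ∑ a ∈ s, ∑ b ∈ s, ∑ c ∈ s, G a b c * h b :=
    (sum_congr rfl fun _ _ => sum_comm).trans sum_comm
  have hswap : ∑ a ∈ s, ∑ b ∈ s, ∑ c ∈ s, G a b c * h b
      = ∑ a ∈ s, ∑ b ∈ s, ∑ c ∈ s, G a b c * h c := by
    refine sum_congr rfl fun a _ => ?_
    rw [sum_comm]
    simp only [hG a]
  have hlhs : ∑ a ∈ s, (∑ b ∈ s, ∑ c ∈ s, G a b c - 2 * ∑ b ∈ s, ∑ c ∈ s, G c a b) * h a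
      = ∑ a ∈ s, ∑ b ∈ s, ∑ c ∈ s, G a b c * h a
        - 2 * ∑ a ∈ s, ∑ b ∈ s, ∑ c ∈ s, G c a b * h a := by
    simp only [sub_mul, sum_sub_distrib, mul_assoc, sum_mul, mul_sum]
  rw [hlhs, hloss, two_mul]
  nth_rw 2 [hswap]
  simp only [mul_sub, sum_sub_distrib]
  ring

lemma enorm3_nonneg (p : Fin 3 → ℤ) : 0 ≤ enorm3 p := Real.sqrt_nonneg _

lemma abs_le_enorm3 (p : Fin 3 → ℤ) (i : Fin 3) : |(p i : ℝ)| ≤ enorm3 p :=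
  Real.abs_le_sqrt <| single_le_sum (f := fun j => ((p j : ℝ)) ^ 2)
    (fun _ _ => sq_nonneg _) (mem_univ i)

lemma mem_latticeBall_iff {R : ℝ} {p : Fin 3 → ℤ} :
    p ∈ latticeBall R ↔ 0 < enorm3 p ∧ enorm3 p < R := by
  refine ⟨fun hp => (mem_filter.mp hp).2, fun hp => mem_filter.mpr ⟨?_, hp⟩⟩
  have hbox : ∀ i, |p i| ≤ ⌈R⌉ := fun i => by
    have : |(p i : ℝ)| < ⌈R⌉ := (abs_le_enorm3 p i).trans_lt (hp.2.trans_le (Int.le_ceil R))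
    exact_mod_cast this.le
  exact mem_Icc.mpr ⟨fun i => neg_le_of_abs_le (hbox i), fun i => le_of_abs_le (hbox i)⟩

lemma enorm3_vec_zero_zero (a : ℤ) : enorm3 ![a, 0, 0] = |(a : ℝ)| := by
  simp [enorm3, Fin.sum_univ_three, Real.sqrt_sq_eq_abs]

noncomputable def collisionTerm (Λ : ℝ) (f : (Fin 3 → ℤ) → ℝ) (a b c : Fin 3 → ℤ) : ℝ :=
  if a = b + c ∧ |enorm3 a - enorm3 b - enorm3 c| ≤ Λ then
    enorm3 a * enorm3 b * enorm3 c * (f b * f c - f a * (f b + f c)) else 0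

lemma collisionTerm_comm (Λ : ℝ) (f : (Fin 3 → ℤ) → ℝ) (a b c : Fin 3 → ℤ) :
    collisionTerm Λ f a b c = collisionTerm Λ f a c b := by
  simp only [collisionTerm, add_comm b c, sub_right_comm _ (enorm3 b)]
  split_ifs <;> ring

lemma QNR_eq_gain_sub_loss (R Λ : ℝ) (f : (Fin 3 → ℤ) → ℝ) (p : Fin 3 → ℤ) :
    QNR R Λ f p = ∑ b ∈ latticeBall R, ∑ c ∈ latticeBall R, collisionTerm Λ f p b c
      - 2 * ∑ b ∈ latticeBall R, ∑ c ∈ latticeBall R, collisionTerm Λ f c p b := by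
  unfold QNR collisionTerm
  congr 2
  refine sum_congr rfl fun b _ => sum_congr rfl fun c _ => ?_
  split_ifs <;> ring

noncomputable def entropyProduction (Λ : ℝ) (f : (Fin 3 → ℤ) → ℝ) (a b c : Fin 3 → ℤ) : ℝ :=
  if a = b + c ∧ |enorm3 a - enorm3 b - enorm3 c| ≤ Λ then
    enorm3 a * enorm3 b * enorm3 c * (f b * f c - f a * (f b + f c)) ^ 2 / (f a * f b * f c)
  else 0

lemma collisionTerm_mul_inv_sub (Λ : ℝ) {f : (Fin 3 → ℤ) → ℝ} {a b c : Fin 3 → ℤ}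
    (ha : 0 < f a) (hb : 0 < f b) (hc : 0 < f c) :
    collisionTerm Λ f a b c * (1 / f a - 1 / f b - 1 / f c) = entropyProduction Λ f a b c := by
  unfold collisionTerm entropyProduction
  split_ifs
  · field_simp
    ring
  · simp

lemma entropyProduction_nonneg (Λ : ℝ) {f : (Fin 3 → ℤ) → ℝ} {a b c : Fin 3 → ℤ}
    (ha : 0 < f a) (hb : 0 < f b) (hc : 0 < f c) : 0 ≤ entropyProduction Λ f a b c := by
  unfold entropyProduction
  split_ifs
  · have := enorm3_nonneg a; have := enorm3_nonneg b; have := enorm3_nonneg c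
    positivity
  · rfl

lemma entropyProduction_pos {Λ : ℝ} {f : (Fin 3 → ℤ) → ℝ} {a b c : Fin 3 → ℤ}
    (ha : 0 < f a) (hb : 0 < f b) (hc : 0 < f c) (hres : a = b + c)
    (hΛ : |enorm3 a - enorm3 b - enorm3 c| ≤ Λ) (hb0 : 0 < enorm3 b) (hc0 : 0 < enorm3 c)
    (ha0 : 0 < enorm3 a) (hbracket : f b * f c - f a * (f b + f c) ≠ 0) :
    0 < entropyProduction Λ f a b c := by
  rw [entropyProduction, if_pos ⟨hres, hΛ⟩]
  positivity

lemma sum_QNR_mul_inv {R : ℝ} (Λ : ℝ) {f : (Fin 3 → ℤ) → ℝ}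
    (hf : ∀ p ∈ latticeBall R, 0 < f p) :
    ∑ p ∈ latticeBall R, QNR R Λ f p * (1 / f p)
      = ∑ a ∈ latticeBall R, ∑ b ∈ latticeBall R, ∑ c ∈ latticeBall R,
          entropyProduction Λ f a b c := by
  simp only [QNR_eq_gain_sub_loss]
  rw [sum_gain_sub_loss_mul _ _ (collisionTerm_comm Λ f)]
  exact sum_congr rfl fun a ha => sum_congr rfl fun b hb => sum_congr rfl fun c hc =>
    collisionTerm_mul_inv_sub Λ (hf a ha) (hf b hb) (hf c hc)

lemma sum_sum_sum_pos {α : Type*} {s : Finset α} {T : α → α → α → ℝ}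
    (hT : ∀ a ∈ s, ∀ b ∈ s, ∀ c ∈ s, 0 ≤ T a b c) {a b c : α} (ha : a ∈ s) (hb : b ∈ s)
    (hc : c ∈ s) (hpos : 0 < T a b c) : 0 < ∑ a ∈ s, ∑ b ∈ s, ∑ c ∈ s, T a b c :=
  sum_pos' (fun a' ha' => sum_nonneg fun b' hb' => sum_nonneg fun c' hc' =>
      hT a' ha' b' hb' c' hc')
    ⟨a, ha, sum_pos' (fun b' hb' => sum_nonneg fun c' hc' => hT a ha b' hb' c' hc')
      ⟨b, hb, sum_pos' (fun c' hc' => hT a ha b hb c' hc') ⟨c, hc, hpos⟩⟩⟩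

lemma sum_entropyProduction_pos {R Λ : ℝ} (hR : 2 < R) (hΛ : 2 ≤ Λ) {f : (Fin 3 → ℤ) → ℝ}
    (hf : ∀ p ∈ latticeBall R, 0 < f p) :
    0 < ∑ a ∈ latticeBall R, ∑ b ∈ latticeBall R, ∑ c ∈ latticeBall R,
      entropyProduction Λ f a b c := by
  have he : enorm3 ![1, 0, 0] = 1 := by simp [enorm3_vec_zero_zero]
  have h2e : enorm3 ![2, 0, 0] = 2 := by simp [enorm3_vec_zero_zero]
  have hne : enorm3 ![-1, 0, 0] = 1 := by simp [enorm3_vec_zero_zero]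
  have me : ![1, 0, 0] ∈ latticeBall R :=
    mem_latticeBall_iff.mpr (by rw [he]; constructor <;> linarith)
  have m2e : ![2, 0, 0] ∈ latticeBall R :=
    mem_latticeBall_iff.mpr (by rw [h2e]; constructor <;> linarith)
  have mne : ![-1, 0, 0] ∈ latticeBall R :=
    mem_latticeBall_iff.mpr (by rw [hne]; constructor <;> linarith)
  have hx := hf _ m2e
  have hy := hf _ me
  have hz := hf _ mne
  have hnonneg : ∀ a ∈ latticeBall R, ∀ b ∈ latticeBall R, ∀ c ∈ latticeBall R,
      0 ≤ entropyProduction Λ f a b c := fun a ha b hb c hc =>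
    entropyProduction_nonneg Λ (hf a ha) (hf b hb) (hf c hc)
  by_cases hbracket :
      f ![1, 0, 0] * f ![1, 0, 0] - f ![2, 0, 0] * (f ![1, 0, 0] + f ![1, 0, 0]) = 0
  · -- then `f e₁ = 2 f (2e₁)`, and the bracket of `e₁ = 2e₁ + (-e₁)` is negative
    have hy2x : f ![1, 0, 0] = 2 * f ![2, 0, 0] := by
      have : f ![1, 0, 0] * (f ![1, 0, 0] - 2 * f ![2, 0, 0]) = 0 := by linarith
      linarith [(mul_eq_zero.mp this).resolve_left hy.ne']
    refine sum_sum_sum_pos hnonneg me m2e mne (entropyProduction_pos hy hx hz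
      (by decide) ?_ (by rw [h2e]; norm_num) (by rw [hne]; norm_num) (by rw [he]; norm_num) ?_)
    · rw [he, h2e, hne]; norm_num; linarith
    · rw [hy2x]; nlinarith
  · exact sum_sum_sum_pos hnonneg m2e me me (entropyProduction_pos hx hy hy (by decide)
      (by rw [he, h2e]; norm_num; linarith) (by rw [he]; norm_num) (by rw [he]; norm_num)
      (by rw [h2e]; norm_num) hbracket)

@[fun_prop]
lemma continuous_extendLB_apply (R : ℝ) (q : Fin 3 → ℤ) :
    Continuous fun g : {p // p ∈ latticeBall R} → ℝ => extendLB R g q := by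
  unfold extendLB
  split_ifs
  exacts [continuous_apply _, continuous_const]

lemma continuous_QNR_extendLB (R Λ : ℝ) (p : Fin 3 → ℤ) :
    Continuous fun g : {p // p ∈ latticeBall R} → ℝ => QNR R Λ (extendLB R g) p := by
  have hterm : ∀ a b c, Continuous fun g : {p // p ∈ latticeBall R} → ℝ =>
      collisionTerm Λ (extendLB R g) a b c := fun a b c => by
    unfold collisionTerm
    split_ifs <;> fun_prop
  simp only [QNR_eq_gain_sub_loss]
  fun_prop

lemma extendLB_coe (R : ℝ) (g : {p // p ∈ latticeBall R} → ℝ) (p : {p // p ∈ latticeBall R}) :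
    extendLB R g p = g p :=
  dif_pos p.2

noncomputable def dissipation (R Λ : ℝ) (g : {p // p ∈ latticeBall R} → ℝ) : ℝ :=
  ∑ p ∈ (latticeBall R).attach, QNR R Λ (extendLB R g) p.val * (-(1 / g p))

lemma continuousOn_dissipation (R Λ : ℝ) :
    ContinuousOn (dissipation R Λ) {g | ∀ p, 0 < g p} := by
  refine continuousOn_finsetSum _ fun p _ => (continuous_QNR_extendLB R Λ p).continuousOn.mul ?_
  exact (continuousOn_const.div (continuous_apply p).continuousOn fun g hg => (hg p).ne').neg

lemma dissipation_neg {R Λ : ℝ} (hR : 2 < R) (hΛ : 2 ≤ Λ)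
    {g : {p // p ∈ latticeBall R} → ℝ} (hg : ∀ p, 0 < g p) : dissipation R Λ g < 0 := by
  have hf : ∀ p ∈ latticeBall R, 0 < extendLB R g p := fun p hp =>
    extendLB_coe R g ⟨p, hp⟩ ▸ hg ⟨p, hp⟩
  have h : dissipation R Λ g
      = -∑ p ∈ latticeBall R, QNR R Λ (extendLB R g) p * (1 / extendLB R g p) := by
    simp only [dissipation, ← extendLB_coe R g, mul_neg, sum_neg_distrib]
    exact congrArg Neg.neg (sum_attach _ fun p => QNR R Λ (extendLB R g) p * (1 / extendLB R g p))
  rw [h, sum_QNR_mul_inv Λ hf, neg_lt_zero]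
  exact sum_entropyProduction_pos hR hΛ hf

/-- Uniform dissipation on compact subsets of the positive orthant for broadening
`Λ ≥ 2` (and `R > 4`): for every compact `K ⊂ (0,∞)^{L_R*}` there is `Δ_K > 0` with
`∑_{p} Q^{NR}_p[f]·(−1/f_p) ≤ −Δ_K` for all `f ∈ K`. -/
theorem uniform_dissipation_on_compacts (R Λ : ℝ) (hR : 4 < R) (hΛ : 2 ≤ Λ)
    (K : Set ({p // p ∈ latticeBall R} → ℝ)) (hK : IsCompact K)
    (hKpos : ∀ g ∈ K, ∀ p, 0 < g p) :
    ∃ Δ : ℝ, 0 < Δ ∧ ∀ g ∈ K,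
      ∑ p ∈ (latticeBall R).attach,
        QNR R Λ (extendLB R g) p.val * (-(1 / g p)) ≤ -Δ := by
  exact hK.exists_pos_forall_le_neg ((continuousOn_dissipation R Λ).mono hKpos)
    fun g hg => dissipation_neg (by linarith) hΛ (hKpos g hg)
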